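/- Fix α ∈ (0, 1] and set c_α = cos(απ/2). Define φ_α(x) = (1/(2 sin(απ/2)))·(1 + 2c_α x^α + x^{2α})²/x^{1+3α} for x > 0. Then |x·φ_α'(x)/φ_α(x) + 1| ≤ 3α for all x > 0. -/

import Mathlib

open Real

noncomputable def φα (α x : ℝ) : ℝ :=
  (1 / (2 * Real.sin (α * π / 2))) *
    (1 + 2 * Real.cos (α * π / 2) * x ^ α + x ^ (2 * α)) ^ 2 / x ^ (1 + 3 * α)

theorem log_deriv_weight_bound (α : ℝ) (hα : α ∈ Set.Ioc (0:ℝ) 1) (x : ℝ) (hx : 0 < x) :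
    |x * deriv (φα α) x / φα α x + 1| ≤ 3 * α := by
  obtain ⟨hα0, hα1⟩ := hα
  set s := Real.sin (α * π / 2) with hs_def
  set c := Real.cos (α * π / 2) with hc_def
  have hs : 0 < s := by
    apply Real.sin_pos_of_pos_of_lt_pi
    · positivity
    · nlinarith [Real.pi_pos]
  have hc : 0 ≤ c := by
    apply Real.cos_nonneg_of_mem_Icc
    constructor
    · nlinarith [Real.pi_pos]
    · nlinarith [Real.pi_pos]
  set t := x ^ α with ht_def
  have ht : 0 < t := Real.rpow_pos_of_pos hx α
  have e2 : x ^ (2 * α) = t ^ 2 := by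
    rw [show (2:ℝ) * α = α * 2 by ring, Real.rpow_mul hx.le, ht_def,
      ← Real.rpow_natCast (x ^ α) 2]
    norm_num
  have e1 : x ^ (α - 1) = t / x := by
    rw [Real.rpow_sub hx, Real.rpow_one, ht_def]
  have e3 : x ^ (2 * α - 1) = t ^ 2 / x := by
    rw [Real.rpow_sub hx, Real.rpow_one, e2]
  have e4 : x ^ (1 + 3 * α) = x * t ^ 3 := by
    rw [Real.rpow_add hx, Real.rpow_one, show (3:ℝ) * α = α * 3 by ring,
      Real.rpow_mul hx.le, ht_def, ← Real.rpow_natCast (x ^ α) 3]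
    norm_num
  have e5 : x ^ (1 + 3 * α - 1) = t ^ 3 := by
    rw [show (1 : ℝ) + 3 * α - 1 = α * 3 by ring, Real.rpow_mul hx.le, ht_def,
      ← Real.rpow_natCast (x ^ α) 3]
    norm_num
  have hP : 0 < 1 + 2 * c * t + t ^ 2 := by nlinarith
  have hQne : x ^ (1 + 3 * α) ≠ 0 := by rw [e4]; positivity
  -- derivative
  have hPder := ((hasDerivAt_const x (1:ℝ)).add
      ((Real.hasDerivAt_rpow_const (p := α) (Or.inl hx.ne')).const_mul (2 * c))).add
      (Real.hasDerivAt_rpow_const (p := 2 * α) (Or.inl hx.ne'))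
  have hQder := Real.hasDerivAt_rpow_const (p := 1 + 3 * α) (x := x) (Or.inl hx.ne')
  have hD := ((hPder.pow 2).const_mul (1 / (2 * s))).div hQder hQne
  have hφ : φα α = fun y : ℝ =>
      1 / (2 * s) * (1 + 2 * c * y ^ α + y ^ (2 * α)) ^ 2 / y ^ (1 + 3 * α) := rfl
  have hdval := hD.deriv
  replace hdval : deriv (φα α) x = _ := hdval
  simp only [Pi.add_apply, Pi.pow_apply] at hdval
  rw [hdval]
  -- rewrite everything in terms of t
  rw [e1, e2, e3, e4, e5]
  simp only [← ht_def]
  push_cast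
  have key : x * ((1 / (2 * s) *
          (2 * (1 + 2 * c * t + t ^ 2) ^ (2 - 1) *
            (0 + 2 * c * (α * (t / x)) + 2 * α * (t ^ 2 / x))) * (x * t ^ 3) -
        1 / (2 * s) * (1 + 2 * c * t + t ^ 2) ^ 2 * ((1 + 3 * α) * t ^ 3)) /
        (x * t ^ 3) ^ 2) / φα α x + 1
      = α * (t ^ 2 - 2 * c * t - 3) / (1 + 2 * c * t + t ^ 2) := by
    have hφx : φα α x = 1 / (2 * s) * (1 + 2 * c * t + t ^ 2) ^ 2 / (x * t ^ 3) := by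
      rw [hφ]; simp only [e2, e4]; rfl
    rw [hφx]
    field_simp
    ring
  rw [key, abs_div, abs_of_pos hP, div_le_iff₀ hP]
  have hq : |t ^ 2 - 2 * c * t - 3| ≤ 3 * (1 + 2 * c * t + t ^ 2) := by
    rw [abs_le]
    constructor <;> nlinarith
  calc |α * (t ^ 2 - 2 * c * t - 3)| = α * |t ^ 2 - 2 * c * t - 3| := by
        rw [abs_mul, abs_of_pos hα0]
    _ ≤ α * (3 * (1 + 2 * c * t + t ^ 2)) := by
        exact mul_le_mul_of_nonneg_left hq hα0.le
    _ = 3 * α * (1 + 2 * c * t + t ^ 2) := by ring
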